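/- arXiv:math/0608426 — 3 statements merged into one kernel-verified Lean document; each statement's English description precedes it below -/
import Mathlib

section
/- Let n ≥ 2 and 0 < θ ≤ π. Let d ≥ 1 and let P_0, P_1, …, P_d : ℝ → ℝ be functions with P_0(t) = 1 for all t, P_k(1) = 1 for all k, and satisfying the positivity property: for every finite set C of points on the unit sphere S^{n-1} ⊂ ℝ^n, Σ_{(c,c') ∈ C×C} P_k(⟨c,c'⟩) ≥ 0 for every k = 0, …, d. Let f_0, …, f_d ∈ ℝ with f_0 > 0 and f_k ≥ 0 for all k ≥ 1, and set F(t) = Σ_{k=0}^d f_k P_k(t). If F(u) ≤ 0 for all u ∈ [-1, cos θ], then every finite set C ⊂ S^{n-1} with ⟨c,c'⟩ ≤ cos θ for all distinct c, c' ∈ C satisfies card(C) ≤ F(1)/f_0. -/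
open scoped RealInnerProductSpace

/-- Delsarte's linear programming bound (Theorem 2.1). Let `P_0, …, P_d : ℝ → ℝ` with
`P_0 = 1`, `P_k(1) = 1`, satisfying the positivity property on the unit sphere
`S^{n-1} ⊂ ℝ^n`. If `f_0 > 0`, `f_k ≥ 0` for `k ≥ 1`, and
`F(t) = ∑_{k=0}^d f_k P_k(t)` satisfies `F(u) ≤ 0` on `[-1, cos θ]`, then every spherical
code `C` with minimal angular distance `θ` satisfies `card C ≤ F(1)/f_0`. -/
theorem delsarte_lp_bound (n : ℕ) (hn : 2 ≤ n) (θ : ℝ) (hθ0 : 0 < θ) (hθπ : θ ≤ Real.pi)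
    (d : ℕ) (hd : 1 ≤ d) (P : ℕ → ℝ → ℝ)
    (hP0 : ∀ t : ℝ, P 0 t = 1)
    (hP1 : ∀ k ≤ d, P k 1 = 1)
    (hpos : ∀ k ≤ d, ∀ C : Finset (EuclideanSpace ℝ (Fin n)),
      (∀ c ∈ C, ⟪c, c⟫ = (1 : ℝ)) → 0 ≤ ∑ c ∈ C, ∑ c' ∈ C, P k ⟪c, c'⟫)
    (f : ℕ → ℝ) (hf0 : 0 < f 0) (hfk : ∀ k, 1 ≤ k → k ≤ d → 0 ≤ f k)
    (hF : ∀ u : ℝ, -1 ≤ u → u ≤ Real.cos θ →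
      ∑ k ∈ Finset.range (d + 1), f k * P k u ≤ 0)
    (C : Finset (EuclideanSpace ℝ (Fin n)))
    (hC : ∀ c ∈ C, ⟪c, c⟫ = (1 : ℝ))
    (hcode : ∀ c ∈ C, ∀ c' ∈ C, c ≠ c' → ⟪c, c'⟫ ≤ Real.cos θ) :
    (C.card : ℝ) ≤ (∑ k ∈ Finset.range (d + 1), f k * P k 1) / f 0 := by
  classical
  set F1 : ℝ := ∑ k ∈ Finset.range (d + 1), f k * P k 1 with hF1
  have hF1eq : F1 = ∑ k ∈ Finset.range (d + 1), f k := by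
    apply Finset.sum_congr rfl
    intro k hk
    rw [hP1 k (Nat.lt_succ_iff.mp (Finset.mem_range.mp hk)), mul_one]
  have hfnn : ∀ k ∈ Finset.range (d + 1), 0 ≤ f k := by
    intro k hk
    rcases Nat.eq_zero_or_pos k with rfl | hk1
    · exact hf0.le
    · exact hfk k hk1 (Nat.lt_succ_iff.mp (Finset.mem_range.mp hk))
  have hF1pos : 0 < F1 := by
    rw [hF1eq]
    calc (0:ℝ) < f 0 := hf0
      _ ≤ _ := Finset.single_le_sum hfnn (Finset.mem_range.mpr (Nat.succ_pos d))
  rcases C.eq_empty_or_nonempty with rfl | hne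
  · simp only [Finset.card_empty, Nat.cast_zero]
    positivity
  have hnorm : ∀ c ∈ C, ‖c‖ = 1 := by
    intro c hc
    have h := hC c hc
    rw [real_inner_self_eq_norm_sq] at h
    nlinarith [norm_nonneg c]
  have hlb : ∀ c ∈ C, ∀ c' ∈ C, (-1:ℝ) ≤ ⟪c, c'⟫ := by
    intro c hc c' hc'
    have h := abs_real_inner_le_norm c c'
    rw [hnorm c hc, hnorm c' hc', mul_one] at h
    linarith [(abs_le.mp h).1]
  set S : ℝ := ∑ c ∈ C, ∑ c' ∈ C, ∑ k ∈ Finset.range (d + 1), f k * P k ⟪c, c'⟫ with hS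
  have hswap : S = ∑ k ∈ Finset.range (d + 1),
      f k * ∑ c ∈ C, ∑ c' ∈ C, P k ⟪c, c'⟫ := by
    simp only [hS, Finset.mul_sum]
    calc ∑ c ∈ C, ∑ c' ∈ C, ∑ k ∈ Finset.range (d + 1), f k * P k ⟪c, c'⟫
        = ∑ c ∈ C, ∑ k ∈ Finset.range (d + 1), ∑ c' ∈ C, f k * P k ⟪c, c'⟫ :=
          Finset.sum_congr rfl fun _ _ => Finset.sum_comm
      _ = _ := Finset.sum_comm
  have hlow : f 0 * (C.card : ℝ) ^ 2 ≤ S := by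
    rw [hswap]
    have h0 : f 0 * ∑ c ∈ C, ∑ c' ∈ C, P 0 ⟪c, c'⟫ = f 0 * (C.card : ℝ) ^ 2 := by
      simp [hP0, sq]
    calc f 0 * (C.card : ℝ) ^ 2
        = f 0 * ∑ c ∈ C, ∑ c' ∈ C, P 0 ⟪c, c'⟫ := h0.symm
      _ ≤ _ := by
          apply Finset.single_le_sum (f := fun k => f k * ∑ c ∈ C, ∑ c' ∈ C, P k ⟪c, c'⟫)
            (fun k hk => mul_nonneg (hfnn k hk)
              (hpos k (Nat.lt_succ_iff.mp (Finset.mem_range.mp hk)) C hC))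
            (Finset.mem_range.mpr (Nat.succ_pos d))
  have hup : S ≤ (C.card : ℝ) * F1 := by
    rw [hS]
    have hterm : ∀ c ∈ C, ∑ c' ∈ C, ∑ k ∈ Finset.range (d + 1), f k * P k ⟪c, c'⟫ ≤ F1 := by
      intro c hc
      rw [← Finset.add_sum_erase _ _ hc]
      have hdiag : ∑ k ∈ Finset.range (d + 1), f k * P k ⟪c, c⟫ = F1 := by
        rw [hC c hc]
      have hoff : ∑ c' ∈ C.erase c, ∑ k ∈ Finset.range (d + 1), f k * P k ⟪c, c'⟫ ≤ 0 := by
        apply Finset.sum_nonpos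
        intro c' hc'
        have hc'C := Finset.mem_of_mem_erase hc'
        exact hF _ (hlb c hc c' hc'C)
          (hcode c hc c' hc'C (Ne.symm (Finset.ne_of_mem_erase hc')))
      linarith
    calc S ≤ ∑ _c ∈ C, F1 := Finset.sum_le_sum hterm
      _ = (C.card : ℝ) * F1 := by rw [Finset.sum_const, nsmul_eq_mul]
  have hcard : (0:ℝ) < (C.card : ℝ) := by
    exact_mod_cast Finset.card_pos.mpr hne
  rw [le_div_iff₀ hf0]
  nlinarith
end

section
/- Let k ≥ 0 be a natural number. For every finite set C of points on the unit circle S^1 ⊂ ℝ^2, Σ_{(c,c') ∈ C×C} T_k(⟨c,c'⟩) ≥ 0, where T_k is the Chebyshev polynomial of the first kind of degree k. -/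
/-!
Identify the plane with `ℂ`. A unit vector is then `e^{iθ}`, the inner product of `e^{iθ}` and
`e^{iθ'}` is `cos (θ - θ')`, and `T_k (cos x) = cos (k x)`. Hence the double sum equals
`∑∑ cos (kθ - kθ') = (∑ cos kθ)² + (∑ sin kθ)² ≥ 0`.
-/

open scoped RealInnerProductSpace

/-- The Chebyshev polynomials of the first kind, defined by `T_0(t) = 1`, `T_1(t) = t`,
and `T_k(t) = 2t T_{k-1}(t) − T_{k-2}(t)` for `k ≥ 2`. -/
def chebT : ℕ → ℝ → ℝ
  | 0, _ => 1
  | 1, t => t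
  | (k + 2), t => 2 * t * chebT (k + 1) t - chebT k t

open Real Finset Polynomial.Chebyshev ComplexConjugate

theorem chebT_eq_eval_T : ∀ (k : ℕ) (t : ℝ), chebT k t = (T ℝ k).eval t
  | 0, t => by simp [chebT]
  | 1, t => by simp [chebT]
  | k + 2, t => by
    rw [chebT, chebT_eq_eval_T (k + 1), chebT_eq_eval_T k]
    push_cast
    simp [T_add_two]

theorem chebT_cos (k : ℕ) (θ : ℝ) : chebT k (cos θ) = cos (k * θ) := by
  rw [chebT_eq_eval_T]
  exact_mod_cast T_real_cos θ k

theorem Complex.re_mul_conj_eq_norm_mul_norm_mul_cos_arg_sub (z w : ℂ) :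
    (z * conj w).re = ‖z‖ * ‖w‖ * Real.cos (arg z - arg w) := by
  rw [Real.cos_sub, Complex.mul_re, Complex.conj_re, Complex.conj_im, ← norm_mul_cos_arg z,
    ← norm_mul_cos_arg w, ← norm_mul_sin_arg z, ← norm_mul_sin_arg w]
  ring

theorem sum_sum_cos_sub_nonneg {ι : Type*} (s : Finset ι) (φ : ι → ℝ) :
    0 ≤ ∑ i ∈ s, ∑ j ∈ s, cos (φ i - φ j) := by
  have h : ∑ i ∈ s, ∑ j ∈ s, cos (φ i - φ j) =
      (∑ i ∈ s, cos (φ i)) ^ 2 + (∑ i ∈ s, sin (φ i)) ^ 2 := by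
    simp only [cos_sub, sum_add_distrib, ← sum_mul, ← mul_sum, sq]
  rw [h]
  positivity

/-- Positivity property of the Chebyshev polynomials on the unit circle: for every finite set
`C` of points on `S^1 ⊂ ℝ^2`, `∑_{(c,c') ∈ C×C} T_k(⟪c,c'⟫) ≥ 0`. -/
theorem chebT_positivity (k : ℕ)
    (C : Finset (EuclideanSpace ℝ (Fin 2))) (hC : ∀ c ∈ C, ⟪c, c⟫ = (1 : ℝ)) :
    0 ≤ ∑ c ∈ C, ∑ c' ∈ C, chebT k ⟪c, c'⟫ := by
  let f := Complex.orthonormalBasisOneI.repr.symm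
  have hf : ∀ c ∈ C, ‖f c‖ = 1 := fun c hc => by
    rw [LinearIsometryEquiv.norm_map, norm_eq_sqrt_real_inner, hC c hc, sqrt_one]
  have hchebT_inner : ∀ c ∈ C, ∀ c' ∈ C,
      chebT k ⟪c, c'⟫ = cos (k * Complex.arg (f c') - k * Complex.arg (f c)) := by
    intro c hc c' hc'
    rw [inner_map_complex f, Complex.re_mul_conj_eq_norm_mul_norm_mul_cos_arg_sub, hf c hc,
      hf c' hc', one_mul, one_mul, chebT_cos, mul_sub]
  rw [sum_congr rfl fun c hc => sum_congr rfl fun c' hc' => hchebT_inner c hc c' hc', sum_comm]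
  exact sum_sum_cos_sub_nonneg C fun c => k * Complex.arg (f c)
end

section
/- Let n ≥ 2, 0 < θ ≤ π, and d ≥ 1. Let P_1, …, P_d : ℝ → ℝ satisfy P_k(1) = 1 and the positivity property: for every finite C ⊂ S^{n-1}, Σ_{(c,c') ∈ C×C} P_k(⟨c,c'⟩) ≥ 0. For k = 0, …, d, let m_k ≥ 1 and let S_k : ℝ³ → (symmetric m_k × m_k real matrices) be functions invariant under all permutations of their three arguments, satisfying: for every finite C ⊂ S^{n-1}, Σ_{(c,c',c'') ∈ C×C×C} S_k(⟨c,c'⟩, ⟨c,c''⟩, ⟨c',c''⟩) is positive semidefinite, and such that S_k(1,1,1) = 0 for k = 1, …, d. Suppose real numbers b₁₁, b₁₂, b₂₂ with the 2×2 matrix [[b₁₁, b₁₂],[b₁₂, b₂₂]] positive semidefinite, reals a_1, …, a_d ≥ 0, and positive semidefinite matrices F_0, …, F_d (F_k of size m_k) satisfy: (i) for all u ∈ [−1, cos θ]: Σ_{k=1}^d a_k P_k(u) + 2b₁₂ + b₂₂ + 3 Σ_{k=0}^d ⟨F_k, S_k(u,u,1)⟩ ≤ −1; and (ii) for all (u,v,t)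 with −1 ≤ u,v,t ≤ cos θ and 1 + 2uvt − u² − v² − t² ≥ 0: b₂₂ + Σ_{k=0}^d ⟨F_k, S_k(u,v,t)⟩ ≤ 0. Then every finite C ⊂ S^{n-1} with ⟨c,c'⟩ ≤ cos θ for all distinct c, c' ∈ C satisfies card(C) ≤ 1 + Σ_{k=1}^d a_k + b₁₁ + ⟨F_0, S_0(1,1,1)⟩. -/
/-!
Put `p = ∑ aₖ Pₖ` and `s = ∑ ⟨Fₖ, Sₖ⟩`. For a code `C` of size `N`, both
`∑_{c,c'} p ⟪c, c'⟫` and `∑_{c,c',c''} s (⟪c, c'⟫, ⟪c, c''⟫, ⟪c', c''⟫)` are nonnegative.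
Split them according to which points coincide: the diagonal contributes `N (p 1 + s 1 1 1)`;
a pair of distinct points contributes, by the symmetry of `s`, `p u + 3 s u u 1`, which (i)
bounds; a triple of distinct points, whose inner products have a nonnegative Gram determinant,
contributes a term that (ii) bounds. Adding `N` times the positive semidefinite form of `b` at
`(1, N - 1)` cancels `b₁₂` and `b₂₂` and leaves `N (1 + p 1 + b₁₁ + s 1 1 1 - N) ≥ 0`.
-/

open scoped RealInnerProductSpace

namespace Finset

variable {α M : Type*} [DecidableEq α] [AddCommMonoid M]

theorem sum_sum_eq_sum_diag_add_sum_sum_erase (s : Finset α) (f : α → α → M) :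
    ∑ x ∈ s, ∑ y ∈ s, f x y = ∑ x ∈ s, f x x + ∑ x ∈ s, ∑ y ∈ s.erase x, f x y := by
  rw [← sum_add_distrib]
  exact sum_congr rfl fun x hx => (add_sum_erase s _ hx).symm

theorem sum_sum_sum_eq_sum_diag_add_sum_sum_erase (s : Finset α) (f : α → α → α → M) :
    ∑ x ∈ s, ∑ y ∈ s, ∑ z ∈ s, f x y z =
      ∑ x ∈ s, f x x x + ∑ x ∈ s, ∑ y ∈ s.erase x, (f x x y + f x y x + f x y y) +
        ∑ x ∈ s, ∑ y ∈ s.erase x, ∑ z ∈ (s.erase x).erase y, f x y z := by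
  have hdiag : ∑ x ∈ s, ∑ z ∈ s, f x x z = ∑ x ∈ s, f x x x + ∑ x ∈ s, ∑ z ∈ s.erase x, f x x z :=
    sum_sum_eq_sum_diag_add_sum_sum_erase s fun x z => f x x z
  have hoff : ∀ x ∈ s, ∀ y ∈ s.erase x, ∑ z ∈ s, f x y z =
      f x y x + f x y y + ∑ z ∈ (s.erase x).erase y, f x y z := fun x hx y hy => by
    rw [← add_sum_erase s _ hx, ← add_sum_erase _ _ hy, add_assoc]
  rw [sum_sum_eq_sum_diag_add_sum_sum_erase, hdiag,
    sum_congr rfl fun x hx => sum_congr rfl (hoff x hx)]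
  simp only [sum_add_distrib]
  abel

theorem sum_sum_erase_le {s : Finset α} {f : α → α → ℝ} {b : ℝ}
    (h : ∀ x ∈ s, ∀ y ∈ s, x ≠ y → f x y ≤ b) :
    ∑ x ∈ s, ∑ y ∈ s.erase x, f x y ≤ #s * (#s - 1) * b := by
  calc ∑ x ∈ s, ∑ y ∈ s.erase x, f x y ≤ ∑ x ∈ s, ∑ y ∈ s.erase x, b :=
        sum_le_sum fun x hx => sum_le_sum fun y hy =>
          h x hx y (mem_of_mem_erase hy) (ne_of_mem_erase hy).symm
    _ = ∑ x ∈ s, (#s - 1) * b := sum_congr rfl fun x hx => by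
        rw [sum_const, card_erase_of_mem hx, nsmul_eq_mul, Nat.cast_pred (card_pos.mpr ⟨x, hx⟩)]
    _ = #s * (#s - 1) * b := by rw [sum_const, nsmul_eq_mul, mul_assoc]

theorem sum_sum_sum_erase_le {s : Finset α} {f : α → α → α → ℝ} {b : ℝ}
    (h : ∀ x ∈ s, ∀ y ∈ s, ∀ z ∈ s, x ≠ y → x ≠ z → y ≠ z → f x y z ≤ b) :
    ∑ x ∈ s, ∑ y ∈ s.erase x, ∑ z ∈ (s.erase x).erase y, f x y z ≤
      #s * (#s - 1) * (#s - 2) * b := by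
  calc ∑ x ∈ s, ∑ y ∈ s.erase x, ∑ z ∈ (s.erase x).erase y, f x y z
        ≤ ∑ x ∈ s, #(s.erase x) * (#(s.erase x) - 1) * b :=
        sum_le_sum fun x hx => sum_sum_erase_le fun y hy z hz hyz =>
          h x hx y (mem_of_mem_erase hy) z (mem_of_mem_erase hz)
            (ne_of_mem_erase hy).symm (ne_of_mem_erase hz).symm hyz
    _ = ∑ x ∈ s, (#s - 1) * (#s - 2) * b := sum_congr rfl fun x hx => by
        rw [card_erase_of_mem hx, Nat.cast_pred (card_pos.mpr ⟨x, hx⟩)]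
        ring
    _ = #s * (#s - 1) * (#s - 2) * b := by rw [sum_const, nsmul_eq_mul]; ring

end Finset

open scoped ComplexOrder in
theorem Matrix.PosSemidef.trace_mul_nonneg {n 𝕜 : Type*} [Fintype n] [RCLike 𝕜]
    {A B : Matrix n n 𝕜} (hA : A.PosSemidef) (hB : B.PosSemidef) : 0 ≤ (A * B).trace := by
  have h := (hA.hadamard hB.transpose).dotProduct_mulVec_nonneg (fun _ => 1)
  convert h using 1
  simp [Matrix.trace, Matrix.mul_apply, dotProduct, Matrix.mulVec, Matrix.hadamard]

theorem Matrix.PosSemidef.quadratic_nonneg_fin_two {a b c : ℝ} (h : (!![a, b; b, c]).PosSemidef)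
    (x : ℝ) : 0 ≤ a + 2 * b * x + c * x ^ 2 := by
  have := h.dotProduct_mulVec_nonneg ![1, x]
  simp only [dotProduct, Pi.star_apply, star_trivial, Matrix.mulVec, Matrix.of_apply,
    Matrix.cons_val', Matrix.cons_val_fin_one, Fin.sum_univ_two, Fin.isValue, Matrix.cons_val_zero,
    mul_one, Matrix.cons_val_one, one_mul] at this
  linear_combination this

theorem neg_one_le_real_inner_of_unit {E : Type*} [NormedAddCommGroup E] [InnerProductSpace ℝ E]
    {x y : E} (hx : ⟪x, x⟫ = 1) (hy : ⟪y, y⟫ = 1) : -1 ≤ ⟪x, y⟫ := by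
  have := real_inner_self_nonneg (x := x + y)
  rw [inner_add_left, inner_add_right, inner_add_right, hx, hy, real_inner_comm x y] at this
  linarith

theorem gram_det_nonneg_of_unit {E : Type*} [NormedAddCommGroup E] [InnerProductSpace ℝ E]
    {x y z : E} (hx : ⟪x, x⟫ = 1) (hy : ⟪y, y⟫ = 1) (hz : ⟪z, z⟫ = 1) :
    0 ≤ 1 + 2 * ⟪x, y⟫ * ⟪x, z⟫ * ⟪y, z⟫ - ⟪x, y⟫ ^ 2 - ⟪x, z⟫ ^ 2 - ⟪y, z⟫ ^ 2 := by
  have := (Matrix.posSemidef_gram ℝ ![x, y, z]).det_nonneg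
  simp only [Matrix.det_fin_three, Matrix.gram_apply, Matrix.cons_val] at this
  rw [hx, hy, hz, real_inner_comm x y, real_inner_comm x z, real_inner_comm y z] at this
  linear_combination this

theorem Finset.sum_sum_sum_mul_nonneg {ι α : Type*} {K : Finset ι} {s : Finset α}
    {w : ι → ℝ} {f : ι → α → α → ℝ} (hw : ∀ k ∈ K, 0 ≤ w k)
    (hf : ∀ k ∈ K, 0 ≤ ∑ x ∈ s, ∑ y ∈ s, f k x y) :
    0 ≤ ∑ x ∈ s, ∑ y ∈ s, ∑ k ∈ K, w k * f k x y := by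
  simp_rw [Finset.sum_comm (t := K), ← Finset.mul_sum]
  exact Finset.sum_nonneg fun k hk => mul_nonneg (hw k hk) (hf k hk)

theorem Finset.sum_sum_sum_sum_trace_mul_nonneg {ι α : Type*} {m : ι → Type*}
    [∀ k, Fintype (m k)]
    {K : Finset ι} {s : Finset α} {F : (k : ι) → Matrix (m k) (m k) ℝ}
    {S : (k : ι) → α → α → α → Matrix (m k) (m k) ℝ} (hF : ∀ k ∈ K, (F k).PosSemidef)
    (hS : ∀ k ∈ K, (∑ x ∈ s, ∑ y ∈ s, ∑ z ∈ s, S k x y z).PosSemidef) :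
    0 ≤ ∑ x ∈ s, ∑ y ∈ s, ∑ z ∈ s, ∑ k ∈ K, (F k * S k x y z).trace := by
  simp_rw [Finset.sum_comm (t := K), ← Matrix.trace_sum, ← Matrix.mul_sum]
  exact Finset.sum_nonneg fun k hk => (hF k hk).trace_mul_nonneg (hS k hk)

section DualBound

variable {E : Type*} [NormedAddCommGroup E] [InnerProductSpace ℝ E]
  (p : ℝ → ℝ) (s : ℝ → ℝ → ℝ → ℝ) {r b11 b12 b22 : ℝ}

theorem card_le_of_nonempty_of_dual_feasible (hs : ∀ u v t, s u v t = s v t u)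
    (hb : ∀ x, 0 ≤ b11 + 2 * b12 * x + b22 * x ^ 2)
    (hpair : ∀ u, -1 ≤ u → u ≤ r → p u + 2 * b12 + b22 + 3 * s u u 1 ≤ -1)
    (htriple : ∀ u v t, -1 ≤ u → u ≤ r → -1 ≤ v → v ≤ r → -1 ≤ t → t ≤ r →
      0 ≤ 1 + 2 * u * v * t - u ^ 2 - v ^ 2 - t ^ 2 → b22 + s u v t ≤ 0)
    {C : Finset E} (hne : C.Nonempty) (hC : ∀ c ∈ C, ⟪c, c⟫ = (1 : ℝ))
    (hcode : ∀ c ∈ C, ∀ c' ∈ C, c ≠ c' → ⟪c, c'⟫ ≤ r)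
    (hp_pos : 0 ≤ ∑ c ∈ C, ∑ c' ∈ C, p ⟪c, c'⟫)
    (hs_pos : 0 ≤ ∑ c ∈ C, ∑ c' ∈ C, ∑ c'' ∈ C, s ⟪c, c'⟫ ⟪c, c''⟫ ⟪c', c''⟫) :
    (C.card : ℝ) ≤ 1 + p 1 + b11 + s 1 1 1 := by
  classical
  have hpair_le : ∀ c ∈ C, ∀ c' ∈ C, c ≠ c' →
      p ⟪c, c'⟫ + (s ⟪c, c⟫ ⟪c, c'⟫ ⟪c, c'⟫ + s ⟪c, c'⟫ ⟪c, c⟫ ⟪c', c⟫ +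
        s ⟪c, c'⟫ ⟪c, c'⟫ ⟪c', c'⟫) ≤ -1 - 2 * b12 - b22 := fun c hc c' hc' hne => by
    have h := hpair _ (neg_one_le_real_inner_of_unit (hC c hc) (hC c' hc')) (hcode c hc c' hc' hne)
    rw [hC c hc, hC c' hc', real_inner_comm c c', ← hs, ← hs]
    linarith
  have htriple_le : ∀ c ∈ C, ∀ c' ∈ C, ∀ c'' ∈ C, c ≠ c' → c ≠ c'' → c' ≠ c'' →
      s ⟪c, c'⟫ ⟪c, c''⟫ ⟪c', c''⟫ ≤ -b22 := fun c hc c' hc' c'' hc'' h1 h2 h3 => by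
    have := htriple _ _ _ (neg_one_le_real_inner_of_unit (hC c hc) (hC c' hc'))
      (hcode c hc c' hc' h1) (neg_one_le_real_inner_of_unit (hC c hc) (hC c'' hc''))
      (hcode c hc c'' hc'' h2) (neg_one_le_real_inner_of_unit (hC c' hc') (hC c'' hc''))
      (hcode c' hc' c'' hc'' h3) (gram_det_nonneg_of_unit (hC c hc) (hC c' hc') (hC c'' hc''))
    linarith
  have hdiag : ∀ g : ℝ → ℝ, ∑ c ∈ C, g ⟪c, c⟫ = C.card * g 1 := fun g => by
    rw [Finset.sum_congr rfl fun c hc => by rw [hC c hc], Finset.sum_const, nsmul_eq_mul]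
  have hoff := Finset.sum_sum_erase_le hpair_le
  have hdistinct := Finset.sum_sum_sum_erase_le htriple_le
  rw [Finset.sum_sum_eq_sum_diag_add_sum_sum_erase, hdiag] at hp_pos
  rw [Finset.sum_sum_sum_eq_sum_diag_add_sum_sum_erase, hdiag fun u => s u u u] at hs_pos
  simp only [Finset.sum_add_distrib] at hoff hs_pos
  have hN : (1 : ℝ) ≤ C.card := by exact_mod_cast hne.card_pos
  have hslack : 0 ≤ C.card * (1 + p 1 + b11 + s 1 1 1 - C.card) := by
    linarith [mul_nonneg (zero_le_one.trans hN) (hb (C.card - 1))]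
  linarith [nonneg_of_mul_nonneg_right hslack (zero_lt_one.trans_le hN)]

theorem card_le_of_dual_feasible (hs : ∀ u v t, s u v t = s v t u)
    (hb : ∀ x, 0 ≤ b11 + 2 * b12 * x + b22 * x ^ 2)
    (hpair : ∀ u, -1 ≤ u → u ≤ r → p u + 2 * b12 + b22 + 3 * s u u 1 ≤ -1)
    (htriple : ∀ u v t, -1 ≤ u → u ≤ r → -1 ≤ v → v ≤ r → -1 ≤ t → t ≤ r →
      0 ≤ 1 + 2 * u * v * t - u ^ 2 - v ^ 2 - t ^ 2 → b22 + s u v t ≤ 0)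
    (hp_pos : ∀ C : Finset E, (∀ c ∈ C, ⟪c, c⟫ = (1 : ℝ)) → 0 ≤ ∑ c ∈ C, ∑ c' ∈ C, p ⟪c, c'⟫)
    (hs_pos : ∀ C : Finset E, (∀ c ∈ C, ⟪c, c⟫ = (1 : ℝ)) →
      0 ≤ ∑ c ∈ C, ∑ c' ∈ C, ∑ c'' ∈ C, s ⟪c, c'⟫ ⟪c, c''⟫ ⟪c', c''⟫)
    {e : E} (he : ⟪e, e⟫ = (1 : ℝ)) {C : Finset E} (hC : ∀ c ∈ C, ⟪c, c⟫ = (1 : ℝ))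
    (hcode : ∀ c ∈ C, ∀ c' ∈ C, c ≠ c' → ⟪c, c'⟫ ≤ r) :
    (C.card : ℝ) ≤ 1 + p 1 + b11 + s 1 1 1 := by
  obtain rfl | hne := C.eq_empty_or_nonempty
  · have hunit : ∀ c ∈ ({e} : Finset E), ⟪c, c⟫ = (1 : ℝ) := by simpa using he
    have := card_le_of_nonempty_of_dual_feasible p s hs hb hpair htriple
      (Finset.singleton_nonempty e) hunit (by simp) (hp_pos _ hunit) (hs_pos _ hunit)
    simp only [Finset.card_singleton, Nat.cast_one] at this
    simp only [Finset.card_empty, Nat.cast_zero]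
    linarith
  · exact card_le_of_nonempty_of_dual_feasible p s hs hb hpair htriple hne hC hcode
      (hp_pos C hC) (hs_pos C hC)

end DualBound

theorem sdp_dual_bound_general (n : ℕ) (hn : 2 ≤ n) (θ : ℝ)
    (d : ℕ)
    (P : ℕ → ℝ → ℝ)
    (hP1 : ∀ k, 1 ≤ k → k ≤ d → P k 1 = 1)
    (hPpos : ∀ k, 1 ≤ k → k ≤ d → ∀ C : Finset (EuclideanSpace ℝ (Fin n)),
      (∀ c ∈ C, ⟪c, c⟫ = (1 : ℝ)) → 0 ≤ ∑ c ∈ C, ∑ c' ∈ C, P k ⟪c, c'⟫)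
    (m : ℕ → ℕ)
    (S : (k : ℕ) → ℝ → ℝ → ℝ → Matrix (Fin (m k)) (Fin (m k)) ℝ)
    (hSperm : ∀ k ≤ d, ∀ u v t : ℝ,
      S k u v t = S k u t v ∧ S k u v t = S k v u t ∧ S k u v t = S k v t u ∧
      S k u v t = S k t u v ∧ S k u v t = S k t v u)
    (hSpos : ∀ k ≤ d, ∀ C : Finset (EuclideanSpace ℝ (Fin n)),
      (∀ c ∈ C, ⟪c, c⟫ = (1 : ℝ)) →
      Matrix.PosSemidef (∑ c ∈ C, ∑ c' ∈ C, ∑ c'' ∈ C, S k ⟪c, c'⟫ ⟪c, c''⟫ ⟪c', c''⟫))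
    (hS111 : ∀ k, 1 ≤ k → k ≤ d → S k 1 1 1 = 0)
    (b11 b12 b22 : ℝ) (hb : Matrix.PosSemidef !![b11, b12; b12, b22])
    (a : ℕ → ℝ) (ha : ∀ k, 1 ≤ k → k ≤ d → 0 ≤ a k)
    (F : (k : ℕ) → Matrix (Fin (m k)) (Fin (m k)) ℝ)
    (hF : ∀ k ≤ d, (F k).PosSemidef)
    (hcond1 : ∀ u : ℝ, -1 ≤ u → u ≤ Real.cos θ →
      ∑ k ∈ Finset.Icc 1 d, a k * P k u + 2 * b12 + b22 +
        3 * ∑ k ∈ Finset.range (d + 1), (F k * S k u u 1).trace ≤ -1)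
    (hcond2 : ∀ u v t : ℝ,
      -1 ≤ u → u ≤ Real.cos θ → -1 ≤ v → v ≤ Real.cos θ → -1 ≤ t → t ≤ Real.cos θ →
      0 ≤ 1 + 2 * u * v * t - u ^ 2 - v ^ 2 - t ^ 2 →
      b22 + ∑ k ∈ Finset.range (d + 1), (F k * S k u v t).trace ≤ 0)
    (C : Finset (EuclideanSpace ℝ (Fin n)))
    (hC : ∀ c ∈ C, ⟪c, c⟫ = (1 : ℝ))
    (hcode : ∀ c ∈ C, ∀ c' ∈ C, c ≠ c' → ⟪c, c'⟫ ≤ Real.cos θ) :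
    (C.card : ℝ) ≤ 1 + ∑ k ∈ Finset.Icc 1 d, a k + b11 + (F 0 * S 0 1 1 1).trace := by
  have hcyc (u v t : ℝ) : ∑ k ∈ Finset.range (d + 1), (F k * S k u v t).trace =
      ∑ k ∈ Finset.range (d + 1), (F k * S k v t u).trace :=
    Finset.sum_congr rfl fun k hk => by
      rw [(hSperm k (Nat.lt_succ_iff.mp (Finset.mem_range.mp hk)) u v t).2.2.1]
  have he : ⟪EuclideanSpace.single (⟨0, by omega⟩ : Fin n) (1 : ℝ),
      EuclideanSpace.single (⟨0, by omega⟩ : Fin n) (1 : ℝ)⟫ = (1 : ℝ) := by simp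
  have hbound := card_le_of_dual_feasible _ _ hcyc hb.quadratic_nonneg_fin_two hcond1 hcond2
    (fun C hC => Finset.sum_sum_sum_mul_nonneg
      (fun k hk => ha k (Finset.mem_Icc.mp hk).1 (Finset.mem_Icc.mp hk).2)
      (fun k hk => hPpos k (Finset.mem_Icc.mp hk).1 (Finset.mem_Icc.mp hk).2 C hC))
    (fun C hC => Finset.sum_sum_sum_sum_trace_mul_nonneg
      (fun k hk => hF k (Nat.lt_succ_iff.mp (Finset.mem_range.mp hk)))
      (fun k hk => hSpos k (Nat.lt_succ_iff.mp (Finset.mem_range.mp hk)) C hC))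
    he hC hcode
  have hp1 : ∑ k ∈ Finset.Icc 1 d, a k * P k 1 = ∑ k ∈ Finset.Icc 1 d, a k :=
    Finset.sum_congr rfl fun k hk => by
      rw [hP1 k (Finset.mem_Icc.mp hk).1 (Finset.mem_Icc.mp hk).2, mul_one]
  have hs1 : ∑ k ∈ Finset.range (d + 1), (F k * S k 1 1 1).trace = (F 0 * S 0 1 1 1).trace := by
    rw [Finset.sum_range_succ', Finset.sum_eq_zero fun k hk => by
      rw [hS111 (k + 1) k.succ_pos (Nat.succ_le_of_lt (Finset.mem_range.mp hk)), mul_zero,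
        Matrix.trace_zero], zero_add]
  rwa [hp1, hs1] at hbound

/-- Theorem 4.1: the dual semidefinite programming bound for spherical codes. Given zonal
polynomials `P_k` with the two-point positivity property and zonal matrix functions `S_k`
(symmetric-matrix valued, invariant under permutations of the three arguments) with the
three-point matrix positivity property and `S_k(1,1,1) = 0` for `k ≥ 1`, any feasible
solution `(b, a, F)` of the dual SDP bounds the cardinality of every spherical code with
minimal angular distance `θ` by `1 + ∑_{k=1}^d a_k + b₁₁ + ⟨F_0, S_0(1,1,1)⟩`. -/
theorem sdp_dual_bound (n : ℕ) (hn : 2 ≤ n) (θ : ℝ) (hθ0 : 0 < θ) (hθπ : θ ≤ Real.pi)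
    (d : ℕ) (hd : 1 ≤ d)
    (P : ℕ → ℝ → ℝ)
    (hP1 : ∀ k, 1 ≤ k → k ≤ d → P k 1 = 1)
    (hPpos : ∀ k, 1 ≤ k → k ≤ d → ∀ C : Finset (EuclideanSpace ℝ (Fin n)),
      (∀ c ∈ C, ⟪c, c⟫ = (1 : ℝ)) → 0 ≤ ∑ c ∈ C, ∑ c' ∈ C, P k ⟪c, c'⟫)
    (m : ℕ → ℕ) (hm : ∀ k ≤ d, 1 ≤ m k)
    (S : (k : ℕ) → ℝ → ℝ → ℝ → Matrix (Fin (m k)) (Fin (m k)) ℝ)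
    (hSsymm : ∀ k ≤ d, ∀ u v t : ℝ, (S k u v t).IsSymm)
    (hSperm : ∀ k ≤ d, ∀ u v t : ℝ,
      S k u v t = S k u t v ∧ S k u v t = S k v u t ∧ S k u v t = S k v t u ∧
      S k u v t = S k t u v ∧ S k u v t = S k t v u)
    (hSpos : ∀ k ≤ d, ∀ C : Finset (EuclideanSpace ℝ (Fin n)),
      (∀ c ∈ C, ⟪c, c⟫ = (1 : ℝ)) →
      Matrix.PosSemidef (∑ c ∈ C, ∑ c' ∈ C, ∑ c'' ∈ C, S k ⟪c, c'⟫ ⟪c, c''⟫ ⟪c', c''⟫))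
    (hS111 : ∀ k, 1 ≤ k → k ≤ d → S k 1 1 1 = 0)
    (b11 b12 b22 : ℝ) (hb : Matrix.PosSemidef !![b11, b12; b12, b22])
    (a : ℕ → ℝ) (ha : ∀ k, 1 ≤ k → k ≤ d → 0 ≤ a k)
    (F : (k : ℕ) → Matrix (Fin (m k)) (Fin (m k)) ℝ)
    (hF : ∀ k ≤ d, (F k).PosSemidef)
    (hcond1 : ∀ u : ℝ, -1 ≤ u → u ≤ Real.cos θ →
      ∑ k ∈ Finset.Icc 1 d, a k * P k u + 2 * b12 + b22 +
        3 * ∑ k ∈ Finset.range (d + 1), (F k * S k u u 1).trace ≤ -1)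
    (hcond2 : ∀ u v t : ℝ,
      -1 ≤ u → u ≤ Real.cos θ → -1 ≤ v → v ≤ Real.cos θ → -1 ≤ t → t ≤ Real.cos θ →
      0 ≤ 1 + 2 * u * v * t - u ^ 2 - v ^ 2 - t ^ 2 →
      b22 + ∑ k ∈ Finset.range (d + 1), (F k * S k u v t).trace ≤ 0)
    (C : Finset (EuclideanSpace ℝ (Fin n)))
    (hC : ∀ c ∈ C, ⟪c, c⟫ = (1 : ℝ))
    (hcode : ∀ c ∈ C, ∀ c' ∈ C, c ≠ c' → ⟪c, c'⟫ ≤ Real.cos θ) :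
    (C.card : ℝ) ≤ 1 + ∑ k ∈ Finset.Icc 1 d, a k + b11 + (F 0 * S 0 1 1 1).trace :=
  sdp_dual_bound_general n hn θ d P hP1 hPpos m S hSperm hSpos hS111 b11 b12 b22 hb a ha F hF hcond1
    hcond2 C hC hcode
end
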